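/- For the Jacobi–Anger expansion: for all real λ, t and θ, e^{−iλt cos θ} = J_0(−λt) + 2 Σ_{n=1}^∞ iⁿ J_n(−λt) cos(nθ), where J_n is the Bessel function of the first kind, and the series converges absolutely. -/

import Mathlib

/-!
With `u = (i x / 2) e^{iθ}` and `v = (i x / 2) e^{-iθ}` we have `e^{i x cos θ} = e^u e^v`.
Multiplying the two exponential series and grouping the terms `u^p v^q / (p! q!)` by
`n = p - q` (writing `m = min p q`), the group of index `n` is exactly
`i^|n| e^{inθ}` times the power series of `J_|n|(x)`. Pairing the indices `n` and `-n` turns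
`e^{inθ} + e^{-inθ}` into `2 cos nθ`. Absolute convergence comes for free: in the
finite-dimensional space `ℂ`, unconditional summability is absolute summability.
-/

/-- The Bessel function of the first kind of integer order `n`:
`J_n(z) = Σ_{m} (−1)^m / (m! (m+n)!) (z/2)^{2m+n}`. -/
noncomputable def besselJ (n : ℕ) (z : ℝ) : ℝ :=
  ∑' m : ℕ, ((-1 : ℝ) ^ m / (m.factorial * (m + n).factorial)) *
    (z / 2) ^ (2 * m + n)

open Complex
open scoped Nat

lemma abs_besselJ_term_le (n m : ℕ) (x : ℝ) :
    |(-1 : ℝ) ^ m / (m ! * (m + n)!) * (x / 2) ^ (2 * m + n)| ≤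
      (|x| / 2) ^ n * (((|x| / 2) ^ 2) ^ m / m !) := by
  have hfact : (m ! : ℝ) ≤ m ! * (m + n)! :=
    le_mul_of_one_le_right (by positivity) (by exact_mod_cast (m + n).factorial_pos)
  rw [abs_mul, abs_div, abs_pow, abs_pow, abs_neg, abs_one, one_pow, abs_div, abs_two,
    abs_of_pos (by positivity), ← pow_mul, mul_div_assoc', ← pow_add, add_comm n,
    one_div_mul_eq_div]
  gcongr

theorem hasSum_besselJ (n : ℕ) (x : ℝ) :
    HasSum (fun m : ℕ => (-1 : ℝ) ^ m / (m ! * (m + n)!) * (x / 2) ^ (2 * m + n))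
      (besselJ n x) :=
  (Summable.of_norm_bounded ((Real.summable_pow_div_factorial _).mul_left _)
    (abs_besselJ_term_le n · x)).hasSum

theorem HasSum.nat_succ_add_neg_succ {G : Type*} [AddCommGroup G] [TopologicalSpace G]
    [IsTopologicalAddGroup G] {f : ℤ → G} {a : G} (hf : HasSum f a) :
    HasSum (fun n : ℕ => f (n + 1 : ℕ) + f (-(n + 1 : ℕ))) (a - f 0) := by
  convert (hasSum_nat_add_iff' 1).mpr hf.nat_add_neg using 1
  simp only [Finset.range_one, Finset.sum_singleton, Nat.cast_zero, neg_zero]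
  abel

def intProdNatEquiv : ℤ × ℕ ≃ ℕ × ℕ where
  toFun p := (p.2 + p.1.toNat, p.2 + (-p.1).toNat)
  invFun p := (p.1 - p.2, min p.1 p.2)
  left_inv p := by ext <;> simp only <;> omega
  right_inv p := by ext <;> simp only <;> omega

theorem hasSum_exp_mul_exp (u v : ℂ) :
    HasSum (fun p : ℕ × ℕ => u ^ p.1 / p.1 ! * (v ^ p.2 / p.2 !)) (exp u * exp v) := by
  have hexp (z : ℂ) : HasSum (fun n : ℕ => z ^ n / n !) (exp z) := by
    rw [exp_eq_exp_ℂ]; exact NormedSpace.expSeries_div_hasSum_exp z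
  have hnorm (z : ℂ) : Summable (fun n : ℕ => ‖z ^ n / (n ! : ℂ)‖) := by
    simpa [norm_div, norm_pow] using Real.summable_pow_div_factorial ‖z‖
  have hs := summable_mul_of_summable_norm (hnorm u) (hnorm v)
  -- elaborating `HasSum.mul` against the expected type instead times out
  have hprod := (hexp u).mul (hexp v) hs
  exact hprod

lemma pow_toNat_mul_pow_neg_toNat {K : Type*} [Field K] (c : K) {w : K} (hw : w ≠ 0) (n : ℤ)
    (m : ℕ) :
    (c * w) ^ (m + n.toNat) / (m + n.toNat)! * ((c * w⁻¹) ^ (m + (-n).toNat) / (m + (-n).toNat)!)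
      = w ^ n * (c ^ (2 * m + n.natAbs) / (m ! * (m + n.natAbs)!)) := by
  obtain ⟨k, rfl | rfl⟩ := n.eq_nat_or_neg
  · simp only [Int.toNat_natCast, Int.toNat_neg_natCast, Int.natAbs_natCast, add_zero,
      zpow_natCast, mul_pow, inv_pow]
    field_simp
    ring
  · simp only [Int.toNat_neg_natCast, neg_neg, Int.toNat_natCast, Int.natAbs_neg,
      Int.natAbs_natCast, add_zero, zpow_neg, zpow_natCast, mul_pow, inv_pow]
    field_simp
    ring

lemma I_mul_div_two_pow (x : ℂ) (m k : ℕ) :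
    (I * x / 2) ^ (2 * m + k) = I ^ k * ((-1) ^ m * (x / 2) ^ (2 * m + k)) := by
  rw [mul_div_assoc, mul_pow, pow_add I, pow_mul, I_sq]
  ring

theorem hasSum_besselJ_generatingFunction (x : ℝ) {w : ℂ} (hw : w ≠ 0) :
    HasSum (fun n : ℤ => I ^ n.natAbs * w ^ n * besselJ n.natAbs x)
      (exp (I * x / 2 * (w + w⁻¹))) := by
  have h := intProdNatEquiv.hasSum_iff.mpr
    (hasSum_exp_mul_exp (I * x / 2 * w) (I * x / 2 * w⁻¹))
  rw [← exp_add, ← mul_add] at h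
  refine h.prod_fiberwise fun n => ?_
  refine ((hasSum_ofReal.mpr (hasSum_besselJ n.natAbs x)).mul_left
    (I ^ n.natAbs * w ^ n)).congr_fun fun m => ?_
  simp only [Function.comp_apply, intProdNatEquiv, Equiv.coe_fn_mk]
  rw [pow_toNat_mul_pow_neg_toNat _ hw, I_mul_div_two_pow]
  push_cast
  ring

lemma exp_mul_I_zpow_add_zpow_neg (θ : ℝ) (n : ℤ) :
    exp (θ * I) ^ n + exp (θ * I) ^ (-n) = 2 * Real.cos (n * θ) := by
  rw [← exp_int_mul, ← exp_int_mul, ofReal_cos, two_cos]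
  push_cast
  ring_nf

theorem hasSum_exp_I_mul_cos (x θ : ℝ) :
    HasSum (fun n : ℤ => I ^ n.natAbs * exp (θ * I) ^ n * besselJ n.natAbs x)
      (exp (I * x * Real.cos θ)) := by
  have hcos := exp_mul_I_zpow_add_zpow_neg θ 1
  rw [zpow_one, zpow_neg_one, Int.cast_one, one_mul] at hcos
  convert hasSum_besselJ_generatingFunction x (exp_ne_zero (θ * I)) using 2
  rw [hcos]
  ring

/-- The Jacobi–Anger expansion:
`e^{−iλt cos θ} = J_0(−λt) + 2 Σ_{n≥1} iⁿ J_n(−λt) cos(nθ)`, with the series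
converging absolutely. -/
theorem jacobi_anger (l t θ : ℝ) :
    Summable (fun n : ℕ =>
      ‖(2 * Complex.I ^ (n + 1) * ((besselJ (n + 1) (-(l * t)) : ℝ) : ℂ) *
          ((Real.cos ((n + 1) * θ) : ℝ) : ℂ))‖) ∧
    HasSum (fun n : ℕ =>
        2 * Complex.I ^ (n + 1) * ((besselJ (n + 1) (-(l * t)) : ℝ) : ℂ) *
          ((Real.cos ((n + 1) * θ) : ℝ) : ℂ))
      (Complex.exp (-(Complex.I * l * t * Real.cos θ))
        - ((besselJ 0 (-(l * t)) : ℝ) : ℂ)) := by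
  have h := (hasSum_exp_I_mul_cos (-(l * t)) θ).nat_succ_add_neg_succ
  have hpair (n : ℕ) :
      I ^ (n + 1) * exp (θ * I) ^ ((n + 1 : ℕ) : ℤ) * besselJ (n + 1) (-(l * t))
        + I ^ (n + 1) * exp (θ * I) ^ (-((n + 1 : ℕ) : ℤ)) * besselJ (n + 1) (-(l * t))
      = 2 * I ^ (n + 1) * besselJ (n + 1) (-(l * t)) * Real.cos ((n + 1) * θ) := by
    rw [← add_mul, ← mul_add, exp_mul_I_zpow_add_zpow_neg]
    push_cast
    ring
  simp only [Int.natAbs_natCast, Int.natAbs_neg, Int.natAbs_zero, pow_zero, zpow_zero,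
    one_mul] at h
  have hexp : I * (-(l * t) : ℝ) * Real.cos θ = -(I * l * t * Real.cos θ) := by
    push_cast
    ring
  rw [hexp] at h
  have hS := h.congr_fun fun n => (hpair n).symm
  exact ⟨summable_norm_iff.mpr hS.summable, hS⟩
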